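/- For every a in the interior of Γ and every z ∈ K: ℙ_z(τ_a = ∞) > 0, i.e. the twisted walk S_a started at z stays in K forever with positive probability; equivalently 𝔼_z[e^{a·(S(τ)−z)}; τ < ∞] < 1. -/

import Mathlib

open scoped ENNReal Classical

noncomputable section

namespace KilledRW

/-- The two-dimensional integer lattice. -/
abbrev Z2 := ℤ × ℤ

/-- The plane `ℝ²`. -/
abbrev R2 := ℝ × ℝ

/-- Euclidean dot product on `ℝ²`. -/
def dotR (a b : R2) : ℝ := a.1 * b.1 + a.2 * b.2

/-- Embedding of the lattice into the plane. -/
def emb (z : Z2) : R2 := ((z.1 : ℝ), (z.2 : ℝ))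

/-- Euclidean norm on `ℝ²`. -/
def nrm (x : R2) : ℝ := Real.sqrt (dotR x x)

/-- The jump generating function `φ(a) = Σ_z γ(z) e^{a·z}`. -/
def jgf (γ : Z2 → ℝ) (a : R2) : ℝ := ∑' z : Z2, γ z * Real.exp (dotR a (emb z))

/-- The gradient `∇φ(a) = Σ_z z γ(z) e^{a·z}` of the jump generating function. -/
def gradJgf (γ : Z2 → ℝ) (a : R2) : R2 :=
  (∑' z : Z2, γ z * Real.exp (dotR a (emb z)) * (z.1 : ℝ),
   ∑' z : Z2, γ z * Real.exp (dotR a (emb z)) * (z.2 : ℝ))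

/-- The normalized gradient `q(a) = ∇φ(a)/|∇φ(a)|`. -/
def qmap (γ : Z2 → ℝ) (a : R2) : R2 := (nrm (gradJgf γ a))⁻¹ • gradJgf γ a

/-- (Sub)stochastic transition kernel of the twisted random walk `S_a`:
`p_a(z,z') = γ(z'-z) e^{a·(z'-z)}`.  For `a = 0` this is the kernel of the original walk. -/
def twKer (γ : Z2 → ℝ) (a : R2) (z z' : Z2) : ℝ≥0∞ :=
  ENNReal.ofReal (γ (z' - z) * Real.exp (dotR a (emb (z' - z))))

/-- `n`-step transition probabilities of the (sub)stochastic kernel `κ`. -/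
def nstep (κ : Z2 → Z2 → ℝ≥0∞) : ℕ → Z2 → Z2 → ℝ≥0∞
  | 0, z, z' => if z' = z then 1 else 0
  | n + 1, z, z' => ∑' w : Z2, κ z w * nstep κ n w z'

/-- `exitP κ A n z z' = ℙ_z(τ_A = n, S(n) = z')`: the probability that the walk with kernel `κ`
started at `z` stays in `A` strictly before time `n` and is at `z' ∉ A` at time `n`
(where `τ_A = inf{n ≥ 0 : S(n) ∉ A}`). -/
def exitP (κ : Z2 → Z2 → ℝ≥0∞) (A : Set Z2) : ℕ → Z2 → Z2 → ℝ≥0∞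
  | 0, z, z' => if z' = z ∧ z ∉ A then 1 else 0
  | n + 1, z, z' => if z ∈ A then ∑' w : Z2, κ z w * exitP κ A n w z' else 0

/-- `aliveP κ A n z z' = ℙ_z(τ_A > n, S(n) = z')`. -/
def aliveP (κ : Z2 → Z2 → ℝ≥0∞) (A : Set Z2) : ℕ → Z2 → Z2 → ℝ≥0∞
  | 0, z, z' => if z' = z ∧ z ∈ A then 1 else 0
  | n + 1, z, z' => if z ∈ A then ∑' w : Z2, κ z w * aliveP κ A n w z' else 0

/-- `ℙ_z(τ_A < ∞)` for the walk with kernel `κ`. -/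
def exitTotal (κ : Z2 → Z2 → ℝ≥0∞) (A : Set Z2) (z : Z2) : ℝ≥0∞ :=
  ∑' n : ℕ, ∑' z' : Z2, exitP κ A n z z'

/-- `𝔼_z[g(S(τ_A)); τ_A < ∞]` for a nonnegative integrand, with values in `ℝ≥0∞`. -/
def exitLExp (κ : Z2 → Z2 → ℝ≥0∞) (A : Set Z2) (z : Z2) (g : Z2 → ℝ) : ℝ≥0∞ :=
  ∑' n : ℕ, ∑' z' : Z2, exitP κ A n z z' * ENNReal.ofReal (g z')

/-- `𝔼_z[g(S(τ_A)); τ_A < ∞]` for a signed integrand (positive part minus negative part). -/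
def exitExp (κ : Z2 → Z2 → ℝ≥0∞) (A : Set Z2) (z : Z2) (g : Z2 → ℝ) : ℝ :=
  (exitLExp κ A z g).toReal - (exitLExp κ A z fun w => -g w).toReal

/-- `𝔼_z[g(S(τ_A)); τ_A ≤ n]`, nonnegative version. -/
def exitLExpTrunc (κ : Z2 → Z2 → ℝ≥0∞) (A : Set Z2) (z : Z2) (g : Z2 → ℝ) (n : ℕ) : ℝ≥0∞ :=
  ∑ m ∈ Finset.range (n + 1), ∑' z' : Z2, exitP κ A m z z' * ENNReal.ofReal (g z')

/-- `𝔼_z[g(S(τ_A)); τ_A ≤ n]`, signed version. -/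
def exitExpTrunc (κ : Z2 → Z2 → ℝ≥0∞) (A : Set Z2) (z : Z2) (g : Z2 → ℝ) (n : ℕ) : ℝ :=
  (exitLExpTrunc κ A z g n).toReal - (exitLExpTrunc κ A z (fun w => -g w) n).toReal

/-- `𝔼_z[g(S(n)); τ_A > n]`, nonnegative version. -/
def aliveLExpAt (κ : Z2 → Z2 → ℝ≥0∞) (A : Set Z2) (z : Z2) (g : Z2 → ℝ) (n : ℕ) : ℝ≥0∞ :=
  ∑' z' : Z2, aliveP κ A n z z' * ENNReal.ofReal (g z')

/-- `𝔼_z[g(S(n)); τ_A > n]`, signed version. -/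
def aliveExpAt (κ : Z2 → Z2 → ℝ≥0∞) (A : Set Z2) (z : Z2) (g : Z2 → ℝ) (n : ℕ) : ℝ :=
  (aliveLExpAt κ A z g n).toReal - (aliveLExpAt κ A z (fun w => -g w) n).toReal

/-!
Since `φ(a) = 1`, the twisted kernel `p_a` is stochastic, and its drift `∇φ(a)` points into
`K`. Hence `φ(a - b fᵢ) < 1` for all `i` once `b > 0` is small, so that
`U(w) = Σᵢ e^{-b fᵢ·w}` satisfies `𝔼_w U(S_a(1)) ≤ Q U(w)` with `Q < 1`. As `U ≥ 1` off `K`,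
this gives `ℙ_w(τ_a = n) ≤ Qⁿ U(w)`, so `ℙ_w(τ_a < ∞) ≤ U(w) / (1 - Q) < 1` at a point
`w = M z` deep inside `K`. By (A2) the killed walk reaches `M z` from `z` with positive
probability, hence `ℙ_z(τ_a < ∞) < 1`; the second inequality is the same quantity computed
with the untwisted walk.
-/

open Filter Topology

lemma dotR_add_left (p q x : R2) : dotR (p + q) x = dotR p x + dotR q x := by
  simp only [dotR, Prod.fst_add, Prod.snd_add]; ring

lemma dotR_smul_left (c : ℝ) (p x : R2) : dotR (c • p) x = c * dotR p x := by
  simp only [dotR, Prod.smul_fst, Prod.smul_snd, smul_eq_mul]; ring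

lemma dotR_smul_right (c : ℝ) (p x : R2) : dotR p (c • x) = c * dotR p x := by
  simp only [dotR, Prod.smul_fst, Prod.smul_snd, smul_eq_mul]; ring

lemma dotR_neg_left (p x : R2) : dotR (-p) x = -dotR p x := by
  simp only [dotR, Prod.fst_neg, Prod.snd_neg]; ring

lemma dotR_zero_left (x : R2) : dotR 0 x = 0 := by simp [dotR]

lemma dotR_emb_zero (p : R2) : dotR p (emb 0) = 0 := by simp [dotR, emb]

lemma dotR_emb_add (p : R2) (x y : Z2) :
    dotR p (emb (x + y)) = dotR p (emb x) + dotR p (emb y) := by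
  simp only [dotR, emb, Prod.fst_add, Prod.snd_add]; push_cast; ring

lemma dotR_emb_nsmul (p : R2) (M : ℕ) (z : Z2) : dotR p (emb (M • z)) = M * dotR p (emb z) := by
  simp [dotR, emb]; ring

theorem _root_.ENNReal.tsum_mul_lt_one {α : Type*} {p g : α → ℝ≥0∞} {w : α}
    (hp : ∑' v, p v = 1) (hg : ∀ v, g v ≤ 1) (hpw : p w ≠ 0) (hgw : g w < 1) :
    ∑' v, p v * g v < 1 := by
  have hpw_top : p w ≠ ⊤ := ne_top_of_le_ne_top ENNReal.one_ne_top (hp ▸ ENNReal.le_tsum w)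
  have hle : ∑' v, p v * g v ≤ 1 :=
    hp ▸ ENNReal.tsum_le_tsum fun v => mul_le_of_le_one_right' (hg v)
  calc ∑' v, p v * g v < ∑' v, p v * 1 :=
        ENNReal.tsum_lt_tsum (ne_top_of_le_ne_top ENNReal.one_ne_top hle)
          (fun v => mul_le_mul_right (hg v) _) ((ENNReal.mul_lt_mul_iff_right hpw hpw_top).2 hgw)
    _ = 1 := by simp [hp]

section Kernel

variable {κ : Z2 → Z2 → ℝ≥0∞} {A : Set Z2}

/-- `ℙ_z(τ_A = n)` for the walk with kernel `κ`. -/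
def exitTimeProb (κ : Z2 → Z2 → ℝ≥0∞) (A : Set Z2) (n : ℕ) (z : Z2) : ℝ≥0∞ :=
  ∑' z', exitP κ A n z z'

lemma exitTimeProb_zero (z : Z2) : exitTimeProb κ A 0 z = if z ∈ A then 0 else 1 := by
  by_cases hz : z ∈ A <;> simp [exitTimeProb, exitP, hz]

lemma exitTimeProb_succ (n : ℕ) (z : Z2) :
    exitTimeProb κ A (n + 1) z =
      if z ∈ A then ∑' w, κ z w * exitTimeProb κ A n w else 0 := by
  by_cases hz : z ∈ A
  · simp only [exitTimeProb, exitP, hz, if_true, ← ENNReal.tsum_mul_left]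
    exact ENNReal.tsum_comm
  · simp [exitTimeProb, exitP, hz]

lemma exitTotal_eq_tsum_exitTimeProb (z : Z2) :
    exitTotal κ A z = ∑' n, exitTimeProb κ A n z := rfl

lemma exitTotal_eq_ite (z : Z2) :
    exitTotal κ A z = if z ∈ A then ∑' w, κ z w * exitTotal κ A w else 1 := by
  rw [exitTotal_eq_tsum_exitTimeProb, tsum_eq_zero_add' ENNReal.summable, exitTimeProb_zero]
  by_cases hz : z ∈ A
  · simp only [exitTimeProb_succ, hz, if_true, zero_add, exitTotal_eq_tsum_exitTimeProb,
      ← ENNReal.tsum_mul_left]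
    exact ENNReal.tsum_comm
  · simp [exitTimeProb_succ, hz]

lemma mem_of_exitTotal_lt_one {z : Z2} (h : exitTotal κ A z < 1) : z ∈ A := by
  by_contra hz
  rw [exitTotal_eq_ite, if_neg hz] at h
  exact lt_irrefl 1 h

section Stochastic

variable (hκ : ∀ z, ∑' w, κ z w = 1)
include hκ

lemma sum_range_exitTimeProb_le_one (n : ℕ) (z : Z2) :
    ∑ m ∈ Finset.range n, exitTimeProb κ A m z ≤ 1 := by
  induction n generalizing z with
  | zero => simp
  | succ n ih =>
    rw [Finset.sum_range_succ', exitTimeProb_zero]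
    by_cases hz : z ∈ A
    · simp only [exitTimeProb_succ, hz, if_true, add_zero]
      calc ∑ m ∈ Finset.range n, ∑' w, κ z w * exitTimeProb κ A m w
          = ∑' w, κ z w * ∑ m ∈ Finset.range n, exitTimeProb κ A m w := by
            simp only [Finset.mul_sum]
            exact (Summable.tsum_finsetSum fun _ _ => ENNReal.summable).symm
        _ ≤ ∑' w, κ z w * 1 := ENNReal.tsum_le_tsum fun w => mul_le_mul_right (ih w) _
        _ = 1 := by simp [hκ z]
    · simp [exitTimeProb_succ, hz]

lemma exitTotal_le_one (z : Z2) : exitTotal κ A z ≤ 1 :=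
  ENNReal.tsum_le_of_sum_range_le fun n => sum_range_exitTimeProb_le_one hκ n z

/-- Reachability inside `A` depends only on the support of the kernel. -/
lemma exitTotal_lt_one_of_aliveP_ne_zero {κ₀ : Z2 → Z2 → ℝ≥0∞}
    (hsupp : ∀ z w, κ₀ z w ≠ 0 → κ z w ≠ 0) {w₀ : Z2}
    (hw₀ : exitTotal κ A w₀ < 1) :
    ∀ (n : ℕ) (z : Z2), aliveP κ₀ A n z w₀ ≠ 0 → exitTotal κ A z < 1
  | 0, z, h => by
    have hz : w₀ = z ∧ z ∈ A := by by_contra hc; simp [aliveP, hc] at h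
    exact hz.1 ▸ hw₀
  | n + 1, z, h => by
    have hz : z ∈ A := by by_contra hc; simp [aliveP, hc] at h
    rw [aliveP, if_pos hz, Ne, ENNReal.tsum_eq_zero, not_forall] at h
    obtain ⟨w, hw⟩ := h
    rw [exitTotal_eq_ite, if_pos hz]
    exact ENNReal.tsum_mul_lt_one (hκ z) (exitTotal_le_one hκ)
      (hsupp z w (left_ne_zero_of_mul hw))
      (exitTotal_lt_one_of_aliveP_ne_zero hsupp hw₀ n w (right_ne_zero_of_mul hw))

end Stochastic

section Lyapunov

variable {U : Z2 → ℝ≥0∞} {Q : ℝ≥0∞} (hU : ∀ w ∉ A, 1 ≤ U w)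
  (hdrift : ∀ v ∈ A, ∑' w, κ v w * U w ≤ Q * U v)
include hU hdrift

lemma exitTimeProb_le_pow_mul (m : ℕ) (w : Z2) : exitTimeProb κ A m w ≤ Q ^ m * U w := by
  induction m generalizing w with
  | zero =>
    rw [exitTimeProb_zero, pow_zero, one_mul]
    split_ifs with hw
    · exact zero_le
    · exact hU w hw
  | succ m ih =>
    rw [exitTimeProb_succ]
    split_ifs with hw
    · calc ∑' v, κ w v * exitTimeProb κ A m v ≤ ∑' v, κ w v * (Q ^ m * U v) :=
            ENNReal.tsum_le_tsum fun v => mul_le_mul_right (ih v) _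
        _ = Q ^ m * ∑' v, κ w v * U v := by
            rw [← ENNReal.tsum_mul_left]; congr 1; ext v; ring
        _ ≤ Q ^ m * (Q * U w) := mul_le_mul_right (hdrift w hw) _
        _ = Q ^ (m + 1) * U w := by ring
    · exact zero_le

lemma one_sub_mul_exitTotal_le (w : Z2) : (1 - Q) * exitTotal κ A w ≤ U w :=
  calc (1 - Q) * exitTotal κ A w ≤ (1 - Q) * ∑' m, Q ^ m * U w :=
        mul_le_mul_right (ENNReal.tsum_le_tsum fun m => exitTimeProb_le_pow_mul hU hdrift m w) _
    _ = (1 - Q) * (1 - Q)⁻¹ * U w := by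
        rw [ENNReal.tsum_mul_right, ENNReal.tsum_geometric, mul_assoc]
    _ ≤ U w := mul_le_of_le_one_left zero_le (ENNReal.mul_inv_le_one _)

lemma exitTotal_lt_one_of_lyapunov {w : Z2} (hw : U w < 1 - Q) : exitTotal κ A w < 1 := by
  by_contra! h
  exact absurd hw (not_lt.2 ((le_mul_of_one_le_right zero_le h).trans
    (one_sub_mul_exitTotal_le hU hdrift w)))

end Lyapunov

end Kernel

lemma abs_mul_exp_mul_le (s : ℝ) {t : ℝ} (ht : |t| ≤ 1) :
    |s| * Real.exp (t * s) ≤ Real.exp (2 * s) + Real.exp (-(2 * s)) := by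
  have hs : |s| ≤ Real.exp |s| := by linarith [Real.add_one_le_exp |s|]
  have hts : Real.exp (t * s) ≤ Real.exp |s| := by
    refine Real.exp_le_exp.2 ((le_abs_self _).trans ?_)
    rw [abs_mul]
    exact mul_le_of_le_one_left (abs_nonneg s) ht
  calc |s| * Real.exp (t * s) ≤ Real.exp |s| * Real.exp |s| :=
        mul_le_mul hs hts (Real.exp_pos _).le (Real.exp_pos _).le
    _ = Real.exp (2 * |s|) := by rw [← Real.exp_add]; ring_nf
    _ ≤ Real.exp (2 * s) + Real.exp (-(2 * s)) := by
        rcases abs_cases s with ⟨h, _⟩ | ⟨h, _⟩ <;> rw [h]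
        · linarith [Real.exp_pos (-(2 * s))]
        · rw [mul_neg]; linarith [Real.exp_pos (2 * s)]

section JumpGeneratingFunction

variable {γ : Z2 → ℝ} (hγ0 : ∀ z, 0 ≤ γ z)
  (hA3 : ∀ a : R2, Summable fun z : Z2 => γ z * Real.exp (dotR a (emb z)))

include hγ0 in
lemma norm_jgf_term_mul_dotR_le (a p : R2) {t : ℝ} (ht : |t| ≤ 1) (z : Z2) :
    ‖γ z * Real.exp (dotR (a + t • p) (emb z)) * dotR p (emb z)‖ ≤
      γ z * Real.exp (dotR (a + (2 : ℝ) • p) (emb z)) +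
        γ z * Real.exp (dotR (a + (-2 : ℝ) • p) (emb z)) := by
  have hc : 0 ≤ γ z * Real.exp (dotR a (emb z)) := mul_nonneg (hγ0 z) (Real.exp_pos _).le
  simp only [dotR_add_left, dotR_smul_left, Real.exp_add, Real.norm_eq_abs]
  calc |γ z * (Real.exp (dotR a (emb z)) * Real.exp (t * dotR p (emb z))) * dotR p (emb z)|
      = γ z * Real.exp (dotR a (emb z)) * (|dotR p (emb z)| * Real.exp (t * dotR p (emb z))) := by
        rw [abs_mul, abs_of_nonneg (mul_nonneg (hγ0 z) (by positivity))]; ring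
    _ ≤ γ z * Real.exp (dotR a (emb z)) *
          (Real.exp (2 * dotR p (emb z)) + Real.exp (-(2 * dotR p (emb z)))) :=
        mul_le_mul_of_nonneg_left (abs_mul_exp_mul_le _ ht) hc
    _ = _ := by ring_nf

include hγ0 hA3 in
lemma dotR_gradJgf (a p : R2) :
    dotR p (gradJgf γ a) = ∑' z, γ z * Real.exp (dotR a (emb z)) * dotR p (emb z) := by
  have hsum : ∀ p : R2, Summable fun z => γ z * Real.exp (dotR a (emb z)) * dotR p (emb z) :=
    fun p => Summable.of_norm_bounded ((hA3 _).add (hA3 _)) fun z => by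
      simpa using norm_jgf_term_mul_dotR_le hγ0 a p (t := 0) (by simp) z
  have h1 : Summable fun z => γ z * Real.exp (dotR a (emb z)) * (z.1 : ℝ) :=
    (hsum (1, 0)).congr fun z => by simp [dotR, emb]
  have h2 : Summable fun z => γ z * Real.exp (dotR a (emb z)) * (z.2 : ℝ) :=
    (hsum (0, 1)).congr fun z => by simp [dotR, emb]
  conv_lhs => rw [gradJgf, dotR]
  rw [← tsum_mul_left, ← tsum_mul_left, ← (h1.mul_left _).tsum_add (h2.mul_left _)]
  congr 1; ext z; simp only [dotR, emb]; ring

include hγ0 hA3 in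
lemma hasDerivAt_jgf_add_smul (a p : R2) :
    HasDerivAt (fun t : ℝ => jgf γ (a + t • p)) (dotR p (gradJgf γ a)) 0 := by
  have hderiv : ∀ (z : Z2) (t : ℝ),
      HasDerivAt (fun t : ℝ => γ z * Real.exp (dotR (a + t • p) (emb z)))
        (γ z * Real.exp (dotR (a + t • p) (emb z)) * dotR p (emb z)) t := by
    intro z t
    simp only [dotR_add_left, dotR_smul_left]
    simpa [mul_assoc] using (((hasDerivAt_id t).mul_const (dotR p (emb z))).const_add
      (dotR a (emb z))).exp.const_mul (γ z)
  have := hasDerivAt_tsum_of_isPreconnected ((hA3 _).add (hA3 _)) isOpen_Ioo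
    isPreconnected_Ioo (fun z t _ => hderiv z t)
    (fun z t ht => norm_jgf_term_mul_dotR_le hγ0 a p (abs_le.2 ⟨ht.1.le, ht.2.le⟩) z)
    (y₀ := 0) (y := 0) (by simp) (by simpa using hA3 a) (by simp)
  rw [dotR_gradJgf hγ0 hA3]
  simpa only [zero_smul, add_zero, jgf] using this

include hγ0 hA3 in
lemma eventually_jgf_add_smul_lt {a p : R2} (hp : dotR p (gradJgf γ a) < 0) :
    ∀ᶠ t : ℝ in 𝓝[>] 0, jgf γ (a + t • p) < jgf γ a := by
  have hslope : ∀ᶠ t : ℝ in 𝓝[>] 0,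
      t⁻¹ * (jgf γ (a + t • p) - jgf γ a) < 0 := by
    simpa using (hasDerivAt_jgf_add_smul hγ0 hA3 a p).tendsto_slope_zero_right.eventually
      (gt_mem_nhds hp)
  filter_upwards [hslope, self_mem_nhdsWithin] with t hslope ht
  linarith [neg_of_mul_neg_right hslope (inv_nonneg.2 (le_of_lt ht))]

end JumpGeneratingFunction

lemma dotR_gradJgf_pos_of_dotR_qmap_pos {γ : Z2 → ℝ} {a p : R2} (h : 0 < dotR p (qmap γ a)) :
    0 < dotR p (gradJgf γ a) := by
  rw [qmap, dotR_smul_right] at h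
  exact pos_of_mul_pos_right h (inv_nonneg.2 (Real.sqrt_nonneg _))

lemma exists_jgf_add_smul_le_lt_one {ι : Type*} [Fintype ι] {γ : Z2 → ℝ}
    (hγ0 : ∀ z, 0 ≤ γ z)
    (hA3 : ∀ a : R2, Summable fun z : Z2 => γ z * Real.exp (dotR a (emb z))) {a : R2}
    (ha : jgf γ a = 1) {p : ι → R2} (hp : ∀ i, dotR (p i) (gradJgf γ a) < 0) :
    ∃ b : ℝ, 0 < b ∧ ∃ Q < 1, ∀ i, ENNReal.ofReal (jgf γ (a + b • p i)) ≤ Q := by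
  obtain ⟨b, hb, hlt⟩ := (eventually_mem_nhdsWithin.and (eventually_all.2 fun i =>
    ha ▸ eventually_jgf_add_smul_lt hγ0 hA3 (hp i))).exists
  exact ⟨b, hb, Finset.univ.sup fun i => ENNReal.ofReal (jgf γ (a + b • p i)),
    (Finset.sup_lt_iff (by simp)).2 fun i _ => ENNReal.ofReal_lt_one.2 (hlt i),
    fun i => Finset.le_sup (f := fun i => ENNReal.ofReal (jgf γ (a + b • p i)))
      (Finset.mem_univ i)⟩

section TwistedWalk

variable {γ : Z2 → ℝ}

lemma twKer_eq_mul_twKer_zero (a : R2) (z w : Z2) :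
    twKer γ a z w = ENNReal.ofReal (Real.exp (dotR a (emb (w - z)))) * twKer γ 0 z w := by
  simp only [twKer, dotR_zero_left, Real.exp_zero, mul_one]
  rw [← ENNReal.ofReal_mul (Real.exp_pos _).le, mul_comm]

lemma exitP_twKer (a : R2) (A : Set Z2) (n : ℕ) (z z' : Z2) :
    exitP (twKer γ a) A n z z' =
      ENNReal.ofReal (Real.exp (dotR a (emb (z' - z)))) * exitP (twKer γ 0) A n z z' := by
  induction n generalizing z with
  | zero =>
    by_cases hc : z' = z ∧ z ∉ A
    · simp [exitP, hc, dotR_emb_zero]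
    · simp [exitP, hc]
  | succ n ih =>
    by_cases hz : z ∈ A
    · simp only [exitP, hz, if_true, ← ENNReal.tsum_mul_left]
      refine tsum_congr fun w => ?_
      rw [ih, twKer_eq_mul_twKer_zero, show z' - z = (w - z) + (z' - w) by abel, dotR_emb_add,
        Real.exp_add, ENNReal.ofReal_mul (Real.exp_pos _).le]
      ring
    · simp [exitP, hz]

lemma exitLExp_twKer_zero_exp (a : R2) (A : Set Z2) (z : Z2) :
    exitLExp (twKer γ 0) A z (fun z' => Real.exp (dotR a (emb (z' - z)))) =
      exitTotal (twKer γ a) A z := by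
  simp only [exitLExp, exitTotal, exitP_twKer a A _ z, mul_comm]

variable (hγ0 : ∀ z, 0 ≤ γ z)
include hγ0

lemma tsum_twKer_mul_exp (a p : R2)
    (hs : Summable fun z : Z2 => γ z * Real.exp (dotR (a + p) (emb z))) (v : Z2) :
    ∑' w, twKer γ a v w * ENNReal.ofReal (Real.exp (dotR p (emb w))) =
      ENNReal.ofReal (Real.exp (dotR p (emb v))) * ENNReal.ofReal (jgf γ (a + p)) := by
  rw [← (Equiv.addRight v).tsum_eq, jgf, ENNReal.ofReal_tsum_of_nonneg
    (fun u => mul_nonneg (hγ0 u) (Real.exp_pos _).le) hs, ← ENNReal.tsum_mul_left]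
  refine tsum_congr fun u => ?_
  simp only [Equiv.coe_addRight, twKer, add_sub_cancel_right, dotR_emb_add, dotR_add_left,
    Real.exp_add]
  rw [← ENNReal.ofReal_mul (mul_nonneg (hγ0 u) (Real.exp_pos _).le),
    ← ENNReal.ofReal_mul (Real.exp_pos _).le]
  ring_nf

lemma tsum_twKer (a : R2) (hs : Summable fun z : Z2 => γ z * Real.exp (dotR a (emb z)))
    (v : Z2) : ∑' w, twKer γ a v w = ENNReal.ofReal (jgf γ a) := by
  simpa [dotR] using tsum_twKer_mul_exp hγ0 a 0 (by simpa using hs) v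

end TwistedWalk

def expSum {ι : Type*} [Fintype ι] (g : ι → R2) (w : Z2) : ℝ≥0∞ :=
  ∑ i, ENNReal.ofReal (Real.exp (dotR (g i) (emb w)))

section ExpSum

variable {ι : Type*} [Fintype ι] {g : ι → R2}

lemma one_le_expSum {w : Z2} (i : ι) (h : 0 ≤ dotR (g i) (emb w)) : 1 ≤ expSum g w :=
  calc (1 : ℝ≥0∞) ≤ ENNReal.ofReal (Real.exp (dotR (g i) (emb w))) := by
        simpa using Real.one_le_exp h
    _ ≤ expSum g w := Finset.single_le_sum (f := fun i => ENNReal.ofReal _)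
        (fun _ _ => zero_le) (Finset.mem_univ i)

lemma tendsto_expSum_nsmul {z : Z2} (h : ∀ i, dotR (g i) (emb z) < 0) :
    Tendsto (fun M : ℕ => expSum g (M • z)) atTop (𝓝 0) := by
  rw [← Finset.sum_const_zero (s := Finset.univ (α := ι))]
  refine tendsto_finsetSum _ fun i _ => ?_
  simp only [dotR_emb_nsmul, Real.exp_nat_mul]
  rw [← ENNReal.ofReal_zero]
  exact ENNReal.tendsto_ofReal (tendsto_pow_atTop_nhds_zero_of_lt_one (Real.exp_pos _).le
    (Real.exp_lt_one_iff.2 (h i)))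

lemma tsum_twKer_mul_expSum_le {γ : Z2 → ℝ} (hγ0 : ∀ z, 0 ≤ γ z)
    (hA3 : ∀ a : R2, Summable fun z : Z2 => γ z * Real.exp (dotR a (emb z))) {a : R2}
    {Q : ℝ≥0∞} (hQ : ∀ i, ENNReal.ofReal (jgf γ (a + g i)) ≤ Q) (v : Z2) :
    ∑' w, twKer γ a v w * expSum g w ≤ Q * expSum g v := by
  simp only [expSum, Finset.mul_sum]
  rw [Summable.tsum_finsetSum fun _ _ => ENNReal.summable]
  refine Finset.sum_le_sum fun i _ => ?_
  rw [tsum_twKer_mul_exp hγ0 a (g i) (hA3 _) v, mul_comm]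
  gcongr
  exact hQ i

end ExpSum

theorem interior_twisted_survival_pos_general
    (γ : Z2 → ℝ) (f : Fin 2 → R2) (K : Set R2)
    -- `γ` is a probability distribution on `ℤ²`
    (hγ0 : ∀ z : Z2, 0 ≤ γ z)
    -- `K` is the open convex cone bounded by the rays through `c 0` and `c 1`
    (hK : K = {x : R2 | ∀ i, 0 < dotR (f i) x})
    -- (A2) the walk killed when leaving `K` is irreducible in `K`
    (hA2 : ∀ z z' : Z2, emb z ∈ K → emb z' ∈ K →
        ∃ n : ℕ, 0 < aliveP (twKer γ 0) (emb ⁻¹' K) n z z')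
    -- (A3) the jump generating function is finite everywhere
    (hA3 : ∀ a : R2, Summable fun z : Z2 => γ z * Real.exp (dotR a (emb z)))
    -- `a` in the interior of `Γ`
    (a : R2) (haD : jgf γ a = 1) (haq : qmap γ a ∈ K)
    (z : Z2) (hz : emb z ∈ K) :
    exitTotal (twKer γ a) (emb ⁻¹' K) z < 1 ∧
    exitLExp (twKer γ 0) (emb ⁻¹' K) z
        (fun z' => Real.exp (dotR a (emb (z' - z)))) < 1 := by
  set A := emb ⁻¹' K
  rw [hK] at haq hz
  have hstoch : ∀ v, ∑' w, twKer γ a v w = 1 := fun v => by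
    simp [tsum_twKer hγ0 a (hA3 a), haD]
  obtain ⟨b, hb, Q, hQ1, hQ⟩ := exists_jgf_add_smul_le_lt_one hγ0 hA3 haD (p := fun i => -f i)
    fun i => by simpa [dotR_neg_left] using dotR_gradJgf_pos_of_dotR_qmap_pos (haq i)
  set U := expSum fun i => b • -f i
  have hU : ∀ w ∉ A, 1 ≤ U w := fun w hw => by
    simp only [A, hK, Set.mem_preimage, Set.mem_ofPred_eq, not_forall, not_lt] at hw
    obtain ⟨i, hi⟩ := hw
    refine one_le_expSum i ?_
    simpa [dotR_smul_left, dotR_neg_left] using mul_nonneg hb.le (neg_nonneg.2 hi)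
  have hdeep : ∀ i, dotR (b • -f i) (emb z) < 0 := fun i => by
    simpa [dotR_smul_left, dotR_neg_left] using mul_pos hb (hz i)
  obtain ⟨M, hM⟩ :=
    ((tendsto_expSum_nsmul hdeep).eventually (gt_mem_nhds (tsub_pos_of_lt hQ1))).exists
  have hM_lt : exitTotal (twKer γ a) A (M • z) < 1 :=
    exitTotal_lt_one_of_lyapunov hU (fun v _ => tsum_twKer_mul_expSum_le hγ0 hA3 hQ v) hM
  obtain ⟨n, hn⟩ := hA2 z (M • z) (hK ▸ hz) (mem_of_exitTotal_lt_one hM_lt)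
  have hz_lt := exitTotal_lt_one_of_aliveP_ne_zero hstoch
    (fun v w h => by rw [twKer_eq_mul_twKer_zero]; simpa [Real.exp_pos] using h) hM_lt n z hn.ne'
  exact ⟨hz_lt, exitLExp_twKer_zero_exp a A z ▸ hz_lt⟩

/-- For every `a` in the interior of `Γ` (i.e. `a ∈ ∂D` with `q(a) ∈ K`) and every
`z ∈ K`: `ℙ_z(τ_a = ∞) > 0`, i.e. the twisted walk started at `z` stays in `K` forever
with positive probability; equivalently `𝔼_z[e^{a·(S(τ)−z)}; τ < ∞] < 1`. -/
theorem interior_twisted_survival_pos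
    (γ : Z2 → ℝ) (c f : Fin 2 → R2) (K : Set R2)
    -- `γ` is a probability distribution on `ℤ²`
    (hγ0 : ∀ z : Z2, 0 ≤ γ z) (hγ1 : HasSum γ 1)
    -- `c 0, c 1` are unit vectors, `f i` is the unit vector perpendicular to `c i`
    -- pointing into the cone; the angle between `c 0` and `c 1` lies in `(0, π)`
    (hcUnit : ∀ i, nrm (c i) = 1) (hfUnit : ∀ i, nrm (f i) = 1)
    (hperp : ∀ i, dotR (f i) (c i) = 0)
    (hinward : ∀ i j, i ≠ j → 0 < dotR (f i) (c j))
    -- `K` is the open convex cone bounded by the rays through `c 0` and `c 1`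
    (hK : K = {x : R2 | ∀ i, 0 < dotR (f i) x})
    -- (A1) the walk is irreducible with nonzero mean
    (hA1 : ∀ z z' : Z2, ∃ n : ℕ, 0 < nstep (twKer γ 0) n z z')
    (hmean : (∑' z : Z2, γ z * (z.1 : ℝ), ∑' z : Z2, γ z * (z.2 : ℝ)) ≠ (0, 0))
    -- (A2) the walk killed when leaving `K` is irreducible in `K`
    (hA2 : ∀ z z' : Z2, emb z ∈ K → emb z' ∈ K →
        ∃ n : ℕ, 0 < aliveP (twKer γ 0) (emb ⁻¹' K) n z z')
    -- (A3) the jump generating function is finite everywhere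
    (hA3 : ∀ a : R2, Summable fun z : Z2 => γ z * Real.exp (dotR a (emb z)))
    -- (A4) the projections `fᵢ·S(n)` are aperiodic random walks
    (hA4 : ∀ i : Fin 2, ∀ d : ℕ,
        (∀ n : ℕ, 0 < n →
          0 < ∑' z : Z2, (if dotR (f i) (emb z) = 0 then nstep (twKer γ 0) n 0 z else 0) →
          d ∣ n) → d = 1)
    -- `a` in the interior of `Γ`
    (a : R2) (haD : jgf γ a = 1) (haq : qmap γ a ∈ K)
    (z : Z2) (hz : emb z ∈ K) :
    exitTotal (twKer γ a) (emb ⁻¹' K) z < 1 ∧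
    exitLExp (twKer γ 0) (emb ⁻¹' K) z
        (fun z' => Real.exp (dotR a (emb (z' - z)))) < 1 :=
  interior_twisted_survival_pos_general γ f K hγ0 hK hA2 hA3 a haD haq z hz

end KilledRW
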